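/- The |0⟩-controlled Z gate on two qutrits, defined by |i,j⟩ ↦ ω^{j·[i=0]}|i,j⟩ (applying Pauli Z to the second qutrit exactly when the first is |0⟩, with ω = e^{2πi/3}), is in the third level of the qutrit Clifford hierarchy: conjugating any two-qutrit Pauli by it yields a Clifford operator. In particular, pushing X⊗X^a through it produces a diagonal Clifford correction. -/

import Mathlib

open Matrix

noncomputable section

/-- The primitive third root of unity `ω = e^{2πi/3}`. -/
def ω : ℂ := Complex.exp (2 * Real.pi * Complex.I / 3)

/-- Pauli X on the `i`-th of `n` qutrits. -/
def XAt (n : ℕ) (i : Fin n) : Matrix (Fin n → ZMod 3) (Fin n → ZMod 3) ℂ :=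
  Matrix.of fun v w => if v = Function.update w i (w i + 1) then 1 else 0

/-- Pauli Z on the `i`-th of `n` qutrits. -/
def ZAt (n : ℕ) (i : Fin n) : Matrix (Fin n → ZMod 3) (Fin n → ZMod 3) ℂ :=
  Matrix.diagonal fun v => ω ^ (v i).val

/-- The `n`-qutrit Pauli group (as a submonoid of matrices). -/
def PauliGrp (n : ℕ) : Submonoid (Matrix (Fin n → ZMod 3) (Fin n → ZMod 3) ℂ) :=
  Submonoid.closure ({ω • 1} ∪ {M | ∃ i, M = XAt n i ∨ M = ZAt n i})

/-- A Clifford unitary: a unitary normalizing the Pauli group up to phase. -/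
def IsClifford (n : ℕ) (U : Matrix (Fin n → ZMod 3) (Fin n → ZMod 3) ℂ) : Prop :=
  U ∈ unitary (Matrix (Fin n → ZMod 3) (Fin n → ZMod 3) ℂ) ∧
    ∀ P ∈ PauliGrp n, ∃ (c : ℂ) (Q : Matrix (Fin n → ZMod 3) (Fin n → ZMod 3) ℂ),
      Q ∈ PauliGrp n ∧ U * P * Uᴴ = c • Q

/-- The `|0⟩`-controlled Z gate on two qutrits:
`|i,j⟩ ↦ ω^{j·[i=0]}|i,j⟩`. -/
def ZCZ : Matrix (Fin 2 → ZMod 3) (Fin 2 → ZMod 3) ℂ :=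
  Matrix.diagonal fun v => if v 0 = 0 then ω ^ (v 1).val else 1

/-!
Write operators on `n` qutrits as `phase f * shift a = diag(ω ^ f(v)) · X^a` with
`f : (ZMod 3)ⁿ → ZMod 3`. The Paulis are exactly these operators with `f` affine, and conjugating
`phase f * shift b` by `phase g * shift a` gives `phase (f (· - a) - Δ_{-b} g) * shift b`; so
`phase g * shift a` is Clifford as soon as every finite difference of `g` is affine.
Now `ZCZ = phase h` for the cubic `h v = (1 - v₀²) v₁`, and conjugating the Pauli `phase f * shift a`
by it gives `phase (f - Δ_{-a} h) * shift a`. Its finite differences are affine because second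
differences of a cubic are.
-/

lemma fwdDiff_sub {M G : Type*} [AddCommMonoid M] [AddCommGroup G] (h : M) (f g : M → G) :
    fwdDiff h (f - g) = fwdDiff h f - fwdDiff h g :=
  map_sub (fwdDiff_aux.fwdDiffₗ M G h) f g

namespace Weyl

open fwdDiff

section

variable {V G : Type*} [DecidableEq V] [AddCommGroup G]

def phase (ψ : AddChar G ℂ) (f : V → G) : Matrix V V ℂ := diagonal fun v => ψ (f v)

variable (ψ : AddChar G ℂ)

@[simp]
lemma phase_zero : phase ψ (0 : V → G) = 1 := by
  simp [phase]

lemma conjTranspose_phase [Finite G] (f : V → G) : (phase ψ f)ᴴ = phase ψ (-f) := by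
  simp [phase, AddChar.map_neg_eq_conj]

variable [Fintype V]

lemma phase_mul_phase (f g : V → G) : phase ψ f * phase ψ g = phase ψ (f + g) := by
  simp [phase, AddChar.map_add_eq_mul]

lemma phase_nsmul (f : V → G) (k : ℕ) : phase ψ (k • f) = phase ψ f ^ k := by
  simp [phase, diagonal_pow, AddChar.map_nsmul_eq_pow]

end

variable {V G : Type*} [AddCommGroup V] [DecidableEq V] [AddCommGroup G]

def shift (a : V) : Matrix V V ℂ := of fun v w => if v = w + a then 1 else 0

@[simp]
lemma shift_zero : (shift 0 : Matrix V V ℂ) = 1 := by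
  ext v w
  simp [shift, one_apply]

lemma conjTranspose_shift (a : V) : (shift a)ᴴ = shift (-a) := by
  ext v w
  simp [shift, eq_comm, ← sub_eq_add_neg, eq_sub_iff_add_eq]

variable [Fintype V] (ψ : AddChar G ℂ)

lemma shift_mul_shift (a b : V) : shift a * shift b = shift (a + b) := by
  ext v w
  simp [shift, mul_apply, ← add_assoc, add_right_comm w b a]

lemma shift_nsmul (a : V) (k : ℕ) : shift (k • a) = shift a ^ k := by
  induction k with
  | zero => simp
  | succ k ih => rw [succ_nsmul, ← shift_mul_shift, ih, pow_succ]

lemma shift_mul_phase (a : V) (f : V → G) :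
    shift a * phase ψ f = phase ψ (fun v => f (v - a)) * shift a := by
  ext v w
  by_cases h : v = w + a <;> simp [shift, phase, h]

lemma phase_mul_shift_mul_phase_mul_shift (f g : V → G) (a b : V) :
    phase ψ f * shift a * (phase ψ g * shift b) =
      phase ψ (f + fun v => g (v - a)) * shift (a + b) := by
  rw [← mul_assoc, mul_assoc _ (shift a), shift_mul_phase, ← mul_assoc, phase_mul_phase,
    mul_assoc, shift_mul_shift]

lemma phase_mul_shift_mem_unitary [Finite G] (f : V → G) (a : V) :
    phase ψ f * shift a ∈ unitary (Matrix V V ℂ) := by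
  refine mul_mem ?_ ?_ <;> rw [Unitary.mem_iff, star_eq_conjTranspose]
  · simp [conjTranspose_phase, phase_mul_phase]
  · simp [conjTranspose_shift, shift_mul_shift]

lemma conj_phase_mul_shift [Finite G] (g f : V → G) (a b : V) :
    phase ψ g * shift a * (phase ψ f * shift b) * (phase ψ g * shift a)ᴴ =
      phase ψ (fun v => f (v - a) - Δ_[-b] g v) * shift b := by
  rw [conjTranspose_mul, conjTranspose_shift, conjTranspose_phase,
    phase_mul_shift_mul_phase_mul_shift, mul_assoc, ← mul_assoc (shift _), shift_mul_shift,
    add_neg_cancel_comm, shift_mul_phase, ← mul_assoc, phase_mul_phase]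
  congr 2
  ext v
  simp only [Pi.add_apply, Pi.neg_apply, fwdDiff, sub_eq_add_neg]
  abel

end Weyl

open Weyl ZMod fwdDiff

local notation "ψ₃" => (stdAddChar : AddChar (ZMod 3) ℂ)

section Qutrits

variable {n : ℕ}

lemma omega_pow_val (k : ZMod 3) : ω ^ k.val = stdAddChar k := by
  rw [stdAddChar_apply, toCircle_apply, ω, ← Complex.exp_nat_mul]
  congr 1
  push_cast
  ring

lemma XAt_eq_shift (i : Fin n) : XAt n i = shift (Pi.single i 1) := by
  ext v w
  rw [XAt, shift, of_apply, of_apply, Pi.update_eq_sub_add_single, Pi.single_add,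
    ← add_assoc, sub_add_cancel]

lemma ZAt_eq_phase (i : Fin n) : ZAt n i = phase ψ₃ fun v => v i := by
  simp [ZAt, phase, omega_pow_val]

lemma omega_smul_one_eq_phase :
    ω • (1 : Matrix (Fin n → ZMod 3) (Fin n → ZMod 3) ℂ) = phase ψ₃ 1 := by
  simp [phase, smul_one_eq_diagonal, ← omega_pow_val, ZMod.val_one]

def affineFunctions (n : ℕ) : Submodule (ZMod 3) ((Fin n → ZMod 3) → ZMod 3) :=
  Submodule.span (ZMod 3) (insert 1 (Set.range fun i v => v i))

lemma mem_affineFunctions (c : ZMod 3) (β : Fin n → ZMod 3) :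
    (fun v => c + ∑ i, β i * v i) ∈ affineFunctions n := by
  have : (fun v => c + ∑ i, β i * v i) = c • 1 + ∑ i, β i • fun v : Fin n → ZMod 3 => v i := by
    ext v
    simp [Finset.sum_apply]
  rw [this]
  refine add_mem (Submodule.smul_mem _ _ (Submodule.subset_span (Set.mem_insert _ _)))
    (sum_mem fun i _ => Submodule.smul_mem _ _ (Submodule.subset_span ?_))
  exact Set.mem_insert_of_mem _ ⟨i, rfl⟩

lemma comp_sub_mem_affineFunctions {f : (Fin n → ZMod 3) → ZMod 3}
    (hf : f ∈ affineFunctions n) (a : Fin n → ZMod 3) :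
    (fun v => f (v - a)) ∈ affineFunctions n := by
  suffices affineFunctions n ≤
      (affineFunctions n).comap (LinearMap.funLeft (ZMod 3) (ZMod 3) (· - a)) from this hf
  refine Submodule.span_le.mpr ?_
  rintro _ (rfl | ⟨i, rfl⟩)
  · exact Submodule.subset_span (Set.mem_insert _ _)
  · have : (fun v : Fin n → ZMod 3 => (v - a) i) = fun v => -a i + ∑ j, Pi.single i 1 j * v j := by
      ext v
      simp [Pi.single_apply, sub_eq_neg_add]
    change (fun v => (v - a) i) ∈ affineFunctions n
    rw [this]
    exact mem_affineFunctions (-a i) (Pi.single i 1)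

lemma fwdDiff_mem_affineFunctions {f : (Fin n → ZMod 3) → ZMod 3}
    (hf : f ∈ affineFunctions n) (b : Fin n → ZMod 3) : Δ_[b] f ∈ affineFunctions n := by
  have h := sub_mem (comp_sub_mem_affineFunctions hf (-b)) hf
  simp only [sub_neg_eq_add] at h
  exact h

lemma phase_mem_pauliGrp {f : (Fin n → ZMod 3) → ZMod 3} (hf : f ∈ affineFunctions n) :
    phase ψ₃ f ∈ PauliGrp n := by
  induction hf using Submodule.span_induction with
  | mem f hf =>
    obtain rfl | ⟨i, rfl⟩ := hf
    · exact omega_smul_one_eq_phase ▸ Submonoid.subset_closure (Or.inl rfl)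
    · exact ZAt_eq_phase i ▸ Submonoid.subset_closure (Or.inr ⟨i, Or.inr rfl⟩)
  | zero => simp
  | add f g _ _ hf hg => exact phase_mul_phase ψ₃ f g ▸ mul_mem hf hg
  | smul c f _ hf =>
    rw [← ZMod.natCast_zmod_val c, Nat.cast_smul_eq_nsmul, phase_nsmul]
    exact pow_mem hf _

lemma shift_mem_pauliGrp (a : Fin n → ZMod 3) : shift a ∈ PauliGrp n := by
  induction a using Pi.single_induction with
  | zero => simp
  | add a b ha hb => exact shift_mul_shift a b ▸ mul_mem ha hb
  | single i c =>
    rw [← ZMod.natCast_zmod_val c, ← mul_one (c.val : ZMod 3), ← smul_eq_mul, Pi.single_smul,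
      Nat.cast_smul_eq_nsmul, shift_nsmul]
    exact pow_mem (XAt_eq_shift i ▸ Submonoid.subset_closure (Or.inr ⟨i, Or.inl rfl⟩)) _

lemma exists_phase_mul_shift_of_mem_pauliGrp {P : Matrix (Fin n → ZMod 3) (Fin n → ZMod 3) ℂ}
    (hP : P ∈ PauliGrp n) : ∃ f ∈ affineFunctions n, ∃ a, P = phase ψ₃ f * shift a := by
  induction hP using Submonoid.closure_induction with
  | mem P hP =>
    obtain rfl | ⟨i, rfl | rfl⟩ := hP
    · exact ⟨1, Submodule.subset_span (Set.mem_insert _ _), 0, by simp [omega_smul_one_eq_phase]⟩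
    · exact ⟨0, zero_mem _, Pi.single i 1, by simp [XAt_eq_shift]⟩
    · exact ⟨_, Submodule.subset_span (Set.mem_insert_of_mem _ ⟨i, rfl⟩), 0,
        by simp [ZAt_eq_phase]⟩
  | one => exact ⟨0, zero_mem _, 0, by simp⟩
  | mul P Q _ _ hP hQ =>
    obtain ⟨f, hf, a, rfl⟩ := hP
    obtain ⟨g, hg, b, rfl⟩ := hQ
    exact ⟨_, add_mem hf (comp_sub_mem_affineFunctions hg a), a + b,
      phase_mul_shift_mul_phase_mul_shift ψ₃ f g a b⟩

lemma phase_mul_shift_mem_pauliGrp {f : (Fin n → ZMod 3) → ZMod 3} (hf : f ∈ affineFunctions n)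
    (a : Fin n → ZMod 3) : phase ψ₃ f * shift a ∈ PauliGrp n :=
  mul_mem (phase_mem_pauliGrp hf) (shift_mem_pauliGrp a)

lemma isClifford_phase_mul_shift {g : (Fin n → ZMod 3) → ZMod 3}
    (hg : ∀ b, Δ_[b] g ∈ affineFunctions n) (a : Fin n → ZMod 3) :
    IsClifford n (phase ψ₃ g * shift a) := by
  refine ⟨phase_mul_shift_mem_unitary ψ₃ g a, fun P hP => ?_⟩
  obtain ⟨f, hf, b, rfl⟩ := exists_phase_mul_shift_of_mem_pauliGrp hP
  exact ⟨1, _, phase_mul_shift_mem_pauliGrp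
    (sub_mem (comp_sub_mem_affineFunctions hf a) (hg (-b))) b,
    by rw [one_smul, conj_phase_mul_shift]; rfl⟩

end Qutrits

/-- By Fermat's little theorem `1 - x ^ 2` is the indicator of `x = 0` on `ZMod 3`. -/
def zczPhase (v : Fin 2 → ZMod 3) : ZMod 3 := (1 - v 0 ^ 2) * v 1

lemma ZCZ_eq_phase : ZCZ = phase ψ₃ zczPhase := by
  refine congrArg diagonal (funext fun v => ?_)
  by_cases h : v 0 = 0
  · simp [h, zczPhase, omega_pow_val]
  · simp [h, zczPhase, ZMod.pow_card_sub_one_eq_one (p := 3) h]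

lemma fwdDiff_fwdDiff_zczPhase_mem (a b : Fin 2 → ZMod 3) :
    Δ_[b] (Δ_[a] zczPhase) ∈ affineFunctions 2 := by
  have : Δ_[b] (Δ_[a] zczPhase) = fun v =>
      -((a 0 + b 0) ^ 2 * (a 1 + b 1) - a 0 ^ 2 * a 1 - b 0 ^ 2 * b 1) +
        ∑ i, ![-2 * (a 0 * b 1 + a 1 * b 0), -2 * a 0 * b 0] i * v i := by
    ext v
    simp only [fwdDiff, zczPhase, Pi.add_apply, Fin.sum_univ_two, cons_val_zero, cons_val_one,
      cons_val_fin_one]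
    ring
  exact this ▸ mem_affineFunctions _ _

/-- The `|0⟩`-controlled Z gate is in the third level of the qutrit Clifford
hierarchy: conjugating any two-qutrit Pauli by it yields a Clifford operator. -/
theorem ZCZ_third_level :
    ∀ P ∈ PauliGrp 2, IsClifford 2 (ZCZ * P * ZCZᴴ) := by
  intro P hP
  obtain ⟨f, hf, a, rfl⟩ := exists_phase_mul_shift_of_mem_pauliGrp hP
  have hconj := conj_phase_mul_shift ψ₃ zczPhase f 0 a
  simp only [shift_zero, mul_one, sub_zero, ← ZCZ_eq_phase] at hconj
  rw [hconj]
  refine isClifford_phase_mul_shift (fun b => ?_) a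
  change Δ_[b] (f - Δ_[-a] zczPhase) ∈ _
  rw [fwdDiff_sub]
  exact sub_mem (fwdDiff_mem_affineFunctions hf b) (fwdDiff_fwdDiff_zczPhase_mem _ _)
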